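/- Let T be a tree of height ω₁, B a set of cofinal branches of T, and g : B → T a Baumgartner function. Let T₀ := {t ∈ T : there is b ∈ B with g(b) <_T t and t ∈ b}. Suppose h is a cofinal branch of T and there is α₀ < ω₁ such that for every α with α₀ ≤ α < ω₁, the element of h of height α belongs to T₀. Then h ∈ B (i.e., h equals some branch in B). -/

import Mathlib

universe u

open Cardinal

/-- A partial order is a tree order if the set of strict predecessors of every
element is well-ordered by `<`. -/
def IsTreeOrder (T : Type u) [PartialOrder T] : Prop :=
  ∀ t : T, IsWellOrder {s : T // s < t} (· < ·)

/-- The height of an element of a tree: the order type of its set of strict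
predecessors. -/
noncomputable def treeHt {T : Type u} [PartialOrder T] (hT : IsTreeOrder T) (t : T) :
    Ordinal.{u} :=
  @Ordinal.type {s : T // s < t} (· < ·) (hT t)

/-- The height of a tree: the least ordinal `α` such that the `α`-th level of the
tree is empty. -/
noncomputable def treeHeight {T : Type u} [PartialOrder T] (hT : IsTreeOrder T) :
    Ordinal.{u} :=
  sInf {α : Ordinal.{u} | ∀ t : T, treeHt hT t ≠ α}

/-- A cofinal branch of a tree: a downward-closed chain containing exactly one
element of height `α` for every `α` less than the height of the tree. -/
def IsCofinalBranch {T : Type u} [PartialOrder T] (hT : IsTreeOrder T) (b : Set T) : Prop :=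
  IsChain (· ≤ ·) b ∧ (∀ t ∈ b, ∀ s : T, s < t → s ∈ b) ∧
    ∀ α < treeHeight hT, ∃! t : T, t ∈ b ∧ treeHt hT t = α

/-- height of `s` computed as `typein` inside the predecessors of `t` -/
lemma treeHt_eq_typein {T : Type u} [PartialOrder T] (hT : IsTreeOrder T) {s t : T}
    (hst : s < t) :
    treeHt hT s = @Ordinal.typein {u : T // u < t} (· < ·) (hT t) ⟨s, hst⟩ := by
  have := hT t
  rw [← @Ordinal.type_subrel {u : T // u < t} (· < ·) (hT t) ⟨s, hst⟩]
  unfold treeHt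
  refine @Ordinal.type_eq.{u} _ _ _ _ (hT s) _ |>.2 ⟨?_⟩
  exact {
    toFun := fun u => ⟨⟨u.1, lt_trans u.2 hst⟩, u.2⟩
    invFun := fun p => ⟨p.1.1, p.2⟩
    left_inv := fun u => rfl
    right_inv := fun p => rfl
    map_rel_iff' := Iff.rfl }

lemma treeHt_lt_of_lt {T : Type u} [PartialOrder T] (hT : IsTreeOrder T) {s t : T}
    (hst : s < t) : treeHt hT s < treeHt hT t := by
  rw [treeHt_eq_typein hT hst]
  exact @Ordinal.typein_lt_type _ _ (hT t) _

lemma exists_pred {T : Type u} [PartialOrder T] (hT : IsTreeOrder T) {t : T}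
    {δ : Ordinal.{u}} (hδ : δ < treeHt hT t) : ∃ s : T, s < t ∧ treeHt hT s = δ := by
  have := hT t
  obtain ⟨s, hs⟩ := @Ordinal.typein_surj {u : T // u < t} (· < ·) (hT t) δ hδ
  exact ⟨s.1, s.2, by rw [treeHt_eq_typein hT s.2]; exact hs⟩

/-- Suppose `T` is a tree of height `ω₁`, `B` is a set of cofinal branches of `T`,
`g : B → T` is a Baumgartner function, and `T₀ = {t ∈ T : ∃ b ∈ B, g b <_T t ∈ b}`.
If `h` is a cofinal branch of `T` such that for some `α₀ < ω₁` every element of `h`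
of height `α ∈ [α₀, ω₁)` belongs to `T₀`, then `h ∈ B`. -/
theorem stmt13 {T : Type u} [PartialOrder T] (hT : IsTreeOrder T)
    (hht : treeHeight hT = (Cardinal.aleph 1).ord)
    (B : Set (Set T)) (hB : ∀ b ∈ B, IsCofinalBranch hT b)
    (g : B → T) (hinj : Function.Injective g) (hmem : ∀ b : B, g b ∈ (b : Set T))
    (hbaum : ∀ b b' : B, g b < g b' → g b' ∉ (b : Set T))
    (h : Set T) (hbr : IsCofinalBranch hT h)
    (α₀ : Ordinal.{u}) (hα₀ : α₀ < (Cardinal.aleph 1).ord)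
    (htail : ∀ α : Ordinal.{u}, α₀ ≤ α → α < (Cardinal.aleph 1).ord →
      ∀ t ∈ h, treeHt hT t = α → ∃ b : B, g b < t ∧ t ∈ (b : Set T)) :
    h ∈ B := by
  set Ω := (Cardinal.aleph 1).ord with hΩ
  -- no element has height Ω
  have hSmem : ∀ t : T, treeHt hT t ≠ Ω := by
    have hne : {α : Ordinal.{u} | ∀ t : T, treeHt hT t ≠ α}.Nonempty := by
      by_contra hc
      rw [Set.not_nonempty_iff_eq_empty] at hc
      have h0 : treeHeight hT = 0 := by
        unfold treeHeight; rw [hc]; exact Ordinal.sInf_empty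
      rw [hht] at h0
      exact absurd h0 (pos_iff_ne_zero.1 (lt_of_le_of_lt (zero_le (a := α₀)) hα₀))
    have := csInf_mem hne
    rw [show sInf {α : Ordinal.{u} | ∀ t : T, treeHt hT t ≠ α} = treeHeight hT from rfl,
      hht] at this
    exact this
  -- every element has height < Ω
  have hlt : ∀ t : T, treeHt hT t < Ω := by
    intro t
    rcases lt_trichotomy (treeHt hT t) Ω with hc | hc | hc
    · exact hc
    · exact absurd hc (hSmem t)
    · obtain ⟨s, _, hs2⟩ := exists_pred hT hc
      exact absurd hs2 (hSmem s)
  have hΩlim : Order.IsSuccLimit Ω := Cardinal.isSuccLimit_ord (aleph0_le_aleph 1)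
  -- chain comparison
  have hcmp : ∀ (c : Set T), IsChain (· ≤ ·) c → ∀ u ∈ c, ∀ v ∈ c,
      treeHt hT u < treeHt hT v → u < v := by
    intro c hc u hu v hv huv
    have hne : u ≠ v := fun e => absurd huv (by rw [e]; exact lt_irrefl _)
    rcases hc hu hv hne with h1 | h1
    · exact lt_of_le_of_ne h1 hne
    · rcases eq_or_lt_of_le h1 with h2 | h2
      · exact absurd h2.symm hne
      · exact absurd (treeHt_lt_of_lt hT h2) (not_lt_of_gt huv)
  -- the elements of h at each level
  have hlev : ∀ α : Ordinal.{u}, α < Ω → ∃ t : T, t ∈ h ∧ treeHt hT t = α :=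
    fun α hα => (hbr.2.2 α (by rw [hht]; exact hα)).exists
  choose tfun htmem htht using hlev
  -- the witnesses from the tail hypothesis
  have hwit : ∀ (α) (h1 : α₀ ≤ α) (h2 : α < Ω),
      ∃ b : B, g b < tfun α h2 ∧ tfun α h2 ∈ (b : Set T) :=
    fun α h1 h2 => htail α h1 h2 (tfun α h2) (htmem α h2) (htht α h2)
  choose bfun hb1 hb2 using hwit
  -- g of the witnesses lies in h
  have hgh : ∀ (α) (h1 : α₀ ≤ α) (h2 : α < Ω), g (bfun α h1 h2) ∈ h :=
    fun α h1 h2 => hbr.2.1 (tfun α h2) (htmem α h2) _ (hb1 α h1 h2)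
  have hglt : ∀ (α) (h1 : α₀ ≤ α) (h2 : α < Ω), treeHt hT (g (bfun α h1 h2)) < α := by
    intro α h1 h2
    have := treeHt_lt_of_lt hT (hb1 α h1 h2)
    rwa [htht α h2] at this
  -- key lemma
  have key : ∀ (α β : Ordinal.{u}) (h1α : α₀ ≤ α) (h2α : α < Ω) (h1β : α₀ ≤ β) (h2β : β < Ω),
      α ≤ β → g (bfun α h1α h2α) ≠ g (bfun β h1β h2β) →
      α ≤ treeHt hT (g (bfun β h1β h2β)) := by
    intro α β h1α h2α h1β h2β hab hne
    set sα := g (bfun α h1α h2α) with hsα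
    set sβ := g (bfun β h1β h2β) with hsβ
    have hnlt : ¬ sβ < sα := by
      intro hlt'
      -- sα ∈ bfun β since sα < tfun β
      have h1 : treeHt hT sα < treeHt hT (tfun β h2β) := by
        rw [htht β h2β]; exact lt_of_lt_of_le (hglt α h1α h2α) hab
      have h2 : sα < tfun β h2β :=
        hcmp h hbr.1 sα (hgh α h1α h2α) (tfun β h2β) (htmem β h2β) h1
      have h3 : sα ∈ (bfun β h1β h2β : Set T) :=
        (hB _ (bfun β h1β h2β).2).2.1 (tfun β h2β) (hb2 β h1β h2β) sα h2
      exact hbaum (bfun β h1β h2β) (bfun α h1α h2α) hlt' h3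
    have hlt2 : sα < sβ := by
      rcases hbr.1 (hgh α h1α h2α) (hgh β h1β h2β) hne with h1 | h1
      · exact lt_of_le_of_ne h1 hne
      · exact absurd (lt_of_le_of_ne h1 (Ne.symm hne)) hnlt
    by_contra hc
    push_neg at hc
    have h1 : treeHt hT sβ < treeHt hT (tfun α h2α) := by rw [htht α h2α]; exact hc
    have h2 : sβ < tfun α h2α :=
      hcmp h hbr.1 sβ (hgh β h1β h2β) (tfun α h2α) (htmem α h2α) h1
    have h3 : sβ ∈ (bfun α h1α h2α : Set T) :=
      (hB _ (bfun α h1α h2α).2).2.1 (tfun α h2α) (hb2 α h1α h2α) sβ h2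
    exact hbaum (bfun α h1α h2α) (bfun β h1β h2β) hlt2 h3
  by_cases hev : ∃ (α : Ordinal.{u}) (h1 : α₀ ≤ α) (h2 : α < Ω),
      ∀ (β) (h1' : α₀ ≤ β) (h2' : β < Ω), α ≤ β → bfun β h1' h2' = bfun α h1 h2
  · obtain ⟨αs, h1s, h2s, hconst⟩ := hev
    set b := bfun αs h1s h2s with hbdef
    have hbB : (b : Set T) ∈ B := b.2
    have hmain : h = (b : Set T) := by
      ext u
      constructor
      · intro hu
        set β := max (treeHt hT u + 1) αs with hβdef
        have h2β : β < Ω := max_lt (hΩlim.add_one_lt (hlt u)) h2s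
        have h1β : α₀ ≤ β := le_trans h1s (le_max_right _ _)
        have hsβ : αs ≤ β := le_max_right _ _
        have htb : tfun β h2β ∈ (b : Set T) := by
          have := hb2 β h1β h2β
          rwa [hconst β h1β h2β hsβ] at this
        have hult : u < tfun β h2β := by
          apply hcmp h hbr.1 u hu (tfun β h2β) (htmem β h2β)
          rw [htht β h2β]
          exact lt_of_lt_of_le (Order.lt_succ _) (le_max_left _ _)
        exact (hB _ hbB).2.1 (tfun β h2β) htb u hult
      · intro hu
        set β := max (treeHt hT u + 1) αs with hβdef
        have h2β : β < Ω := max_lt (hΩlim.add_one_lt (hlt u)) h2s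
        have h1β : α₀ ≤ β := le_trans h1s (le_max_right _ _)
        have hsβ : αs ≤ β := le_max_right _ _
        have htb : tfun β h2β ∈ (b : Set T) := by
          have := hb2 β h1β h2β
          rwa [hconst β h1β h2β hsβ] at this
        have hult : u < tfun β h2β := by
          apply hcmp (b : Set T) (hB _ hbB).1 u hu (tfun β h2β) htb
          rw [htht β h2β]
          exact lt_of_lt_of_le (Order.lt_succ _) (le_max_left _ _)
        exact hbr.2.1 (tfun β h2β) (htmem β h2β) u hult
    rw [hmain]; exact hbB
  · push_neg at hev
    exfalso
    -- build an increasing ω-sequence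
    have step : ∀ p : {α : Ordinal.{u} // α₀ ≤ α ∧ α < Ω},
        ∃ q : {α : Ordinal.{u} // α₀ ≤ α ∧ α < Ω},
          p.1 ≤ q.1 ∧ p.1 ≤ treeHt hT (g (bfun q.1 q.2.1 q.2.2)) := by
      rintro ⟨α, h1, h2⟩
      obtain ⟨β, h1', h2', hle, hne⟩ := hev α h1 h2
      refine ⟨⟨β, h1', h2'⟩, hle, ?_⟩
      exact key α β h1 h2 h1' h2' hle (fun e => hne (hinj e).symm)
    choose stepf hstep1 hstep2 using step
    set γ : ℕ → {α : Ordinal.{u} // α₀ ≤ α ∧ α < Ω} :=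
      fun n => stepf^[n] ⟨α₀, le_rfl, hα₀⟩ with hγdef
    have hγsucc : ∀ n, γ (n + 1) = stepf (γ n) := by
      intro n; simp [hγdef, Function.iterate_succ_apply']
    have hlamlt : (⨆ n : ℕ, (γ n).1) < Ω :=
      by
        have := Ordinal.iSup_lt_omega_one (f := fun n => (γ n).1) (fun n => by rw [← Cardinal.ord_aleph]; exact (γ n).2.2)
        rwa [← Cardinal.ord_aleph] at this
    set lam := ⨆ n : ℕ, (γ n).1 with hlamdef
    have hbdd : BddAbove (Set.range fun n : ℕ => (γ n).1) := Ordinal.bddAbove_range _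
    have hγle : ∀ n, (γ n).1 ≤ lam := fun n => le_ciSup hbdd n
    have h1lam : α₀ ≤ lam := le_trans (le_of_eq rfl) (hγle 0)
    have hflam : ∀ n, (γ n).1 ≤ treeHt hT (g (bfun lam h1lam hlamlt)) := by
      intro n
      have hq := hγsucc n
      have h1 : (γ n).1 ≤ treeHt hT (g (bfun (γ (n+1)).1 (γ (n+1)).2.1 (γ (n+1)).2.2)) := by
        rw [hq]; exact hstep2 (γ n)
      by_cases hne : g (bfun (γ (n+1)).1 (γ (n+1)).2.1 (γ (n+1)).2.2) = g (bfun lam h1lam hlamlt)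
      · rwa [hne] at h1
      · have h2 := key (γ (n+1)).1 lam (γ (n+1)).2.1 (γ (n+1)).2.2 h1lam hlamlt (hγle (n+1)) hne
        have h3 : (γ n).1 ≤ (γ (n+1)).1 := by rw [hγsucc n]; exact hstep1 (γ n)
        exact le_trans h3 h2
    have hlamle : lam ≤ treeHt hT (g (bfun lam h1lam hlamlt)) := ciSup_le hflam
    exact absurd (hglt lam h1lam hlamlt) (not_lt_of_ge hlamle)
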